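/- The only point (x₁, x₂) ∈ ℝ² satisfying g(x₁) + 6·(1 − L(x₂)) = 0 and g(x₂) + 6·L(x₁) = 0 is the origin (0, 0). That is, the planar system ẋ₁ = g(x₁) + 6(1 − L(x₂)), ẋ₂ = g(x₂) + 6L(x₁) has a unique equilibrium, located at the origin. -/

import Mathlib

/-!
On the square `|x₁|, |x₂| < 1` the function `L` is affine and the equilibrium equations become
`3x₁ - x₁³ = 3x₂`, `3x₂ - x₂³ = -3x₁`; pairing them with `(x₁, x₂)` gives
`x₁²(3 - x₁²) + x₂²(3 - x₂²) = 0`, forcing the origin. Outside the square `L` takes the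
value `0` or `1` at some coordinate, so the other one solves `g = 0` or `g = -6`. Since
`g x = -(x - 1)²(x + 2) - 1 = -(x + 1)²(x - 2) - 5`, that solution lies below `-2` or above `2`,
where `L` is again constant, and going once around the loop contradicts the starting case.
-/

noncomputable def gcub (x : ℝ) : ℝ := 3 * x - x ^ 3 - 3

noncomputable def Lpl (x : ℝ) : ℝ := if x ≤ -1 then 0 else if x < 1 then (x + 1) / 2 else 1

theorem lt_neg_two_of_gcub_eq_zero {x : ℝ} (h : gcub x = 0) : x < -2 := by
  have hfac : gcub x = -(x - 1) ^ 2 * (x + 2) - 1 := by unfold gcub; ring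
  by_contra! hx
  nlinarith [mul_nonneg (sq_nonneg (x - 1)) (by linarith : (0 : ℝ) ≤ x + 2)]

theorem two_lt_of_gcub_eq_neg_six {x : ℝ} (h : gcub x = -6) : 2 < x := by
  have hfac : gcub x = -(x + 1) ^ 2 * (x - 2) - 5 := by unfold gcub; ring
  by_contra! hx
  nlinarith [mul_nonneg (sq_nonneg (x + 1)) (by linarith : (0 : ℝ) ≤ 2 - x)]

theorem Lpl_of_le_neg_one {x : ℝ} (hx : x ≤ -1) : Lpl x = 0 := if_pos hx

theorem Lpl_of_one_le {x : ℝ} (hx : 1 ≤ x) : Lpl x = 1 := by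
  rw [Lpl, if_neg (by linarith), if_neg (by linarith)]

theorem Lpl_of_mem_Ioo {x : ℝ} (hx : x ∈ Set.Ioo (-1) 1) : Lpl x = (x + 1) / 2 := by
  rw [Lpl, if_neg (not_le.mpr hx.1), if_pos hx.2]

theorem le_neg_one_or_mem_Ioo_or_one_le (x : ℝ) : x ≤ -1 ∨ x ∈ Set.Ioo (-1) 1 ∨ 1 ≤ x := by
  rcases le_or_gt x (-1) with h | h
  · exact Or.inl h
  · rcases lt_or_ge x 1 with h' | h'
    · exact Or.inr (Or.inl ⟨h, h'⟩)
    · exact Or.inr (Or.inr h')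

theorem eq_zero_of_cubic_rotation_eq_zero {x₁ x₂ : ℝ} (hx₁ : x₁ ^ 2 < 3) (hx₂ : x₂ ^ 2 < 3)
    (h₁ : 3 * x₁ - x₁ ^ 3 - 3 * x₂ = 0) (h₂ : 3 * x₂ - x₂ ^ 3 + 3 * x₁ = 0) :
    x₁ = 0 ∧ x₂ = 0 := by
  have hsum : x₁ ^ 2 * (3 - x₁ ^ 2) + x₂ ^ 2 * (3 - x₂ ^ 2) = 0 := by
    linear_combination x₁ * h₁ + x₂ * h₂
  have t₁ : 0 ≤ x₁ ^ 2 * (3 - x₁ ^ 2) := mul_nonneg (sq_nonneg _) (by linarith)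
  have t₂ : 0 ≤ x₂ ^ 2 * (3 - x₂ ^ 2) := mul_nonneg (sq_nonneg _) (by linarith)
  have e₁ : x₁ ^ 2 * (3 - x₁ ^ 2) = 0 := by linarith
  have e₂ : x₂ ^ 2 * (3 - x₂ ^ 2) = 0 := by linarith
  simp only [mul_eq_zero, pow_eq_zero_iff two_ne_zero] at e₁ e₂
  exact ⟨e₁.resolve_right (by linarith), e₂.resolve_right (by linarith)⟩

theorem sq_lt_three_of_mem_Ioo {x : ℝ} (hx : x ∈ Set.Ioo (-1) 1) : x ^ 2 < 3 := by
  nlinarith [hx.1, hx.2]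

theorem eq_zero_of_equilibrium {x₁ x₂ : ℝ} (h₁ : gcub x₁ + 6 * (1 - Lpl x₂) = 0)
    (h₂ : gcub x₂ + 6 * Lpl x₁ = 0) : x₁ = 0 ∧ x₂ = 0 := by
  rcases le_neg_one_or_mem_Ioo_or_one_le x₁ with hx₁ | hx₁ | hx₁
  · rw [Lpl_of_le_neg_one hx₁] at h₂
    have hx₂ := lt_neg_two_of_gcub_eq_zero (by linarith : gcub x₂ = 0)
    rw [Lpl_of_le_neg_one (by linarith)] at h₁
    linarith [two_lt_of_gcub_eq_neg_six (by linarith : gcub x₁ = -6)]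
  · rcases le_neg_one_or_mem_Ioo_or_one_le x₂ with hx₂ | hx₂ | hx₂
    · rw [Lpl_of_le_neg_one hx₂] at h₁
      linarith [hx₁.2, two_lt_of_gcub_eq_neg_six (by linarith : gcub x₁ = -6)]
    · rw [Lpl_of_mem_Ioo hx₁] at h₂
      rw [Lpl_of_mem_Ioo hx₂] at h₁
      unfold gcub at h₁ h₂
      exact eq_zero_of_cubic_rotation_eq_zero (sq_lt_three_of_mem_Ioo hx₁)
        (sq_lt_three_of_mem_Ioo hx₂) (by linarith) (by linarith)
    · rw [Lpl_of_one_le hx₂] at h₁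
      linarith [hx₁.1, lt_neg_two_of_gcub_eq_zero (by linarith : gcub x₁ = 0)]
  · rw [Lpl_of_one_le hx₁] at h₂
    have hx₂ := two_lt_of_gcub_eq_neg_six (by linarith : gcub x₂ = -6)
    rw [Lpl_of_one_le (by linarith)] at h₁
    linarith [lt_neg_two_of_gcub_eq_zero (by linarith : gcub x₁ = 0)]

/-- Section 5.2 of the paper: the planar system
`ẋ₁ = g(x₁) + 6(1 - L(x₂))`, `ẋ₂ = g(x₂) + 6 L(x₁)` has a unique
equilibrium, located at the origin. -/
theorem stmt_17 :
    ∀ x1 x2 : ℝ,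
      (gcub x1 + 6 * (1 - Lpl x2) = 0 ∧ gcub x2 + 6 * Lpl x1 = 0) ↔
      (x1 = 0 ∧ x2 = 0) := by
  intro x1 x2
  constructor
  · rintro ⟨h₁, h₂⟩
    exact eq_zero_of_equilibrium h₁ h₂
  · rintro ⟨rfl, rfl⟩
    norm_num [gcub, Lpl]
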